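/- For all nonnegative reals y₁, y₂, y₃: h₄(y)²/225 ≥ h₅(y)·h₂(y)·h₁(y)/378, where h_d denotes the sum of all monomials of degree d in y₁,y₂,y₃. Equivalently, H₍₄₄₎(y₁,y₂,y₃) ≥ H₍₅₂₁₎(y₁,y₂,y₃) on the nonnegative orthant of ℝ³. -/
import Mathlib

/-- The complete homogeneous symmetric polynomial of degree `d` in three variables:
the sum of all monomials `y₁^a * y₂^b * y₃^c` with `a + b + c = d`. -/
noncomputable def hcomplete (d : ℕ) (y₁ y₂ y₃ : ℝ) : ℝ :=
  ∑ a ∈ Finset.range (d + 1), ∑ b ∈ Finset.range (d + 1 - a),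
    y₁ ^ a * y₂ ^ b * y₃ ^ (d - a - b)

set_option maxHeartbeats 2000000 in
/-- The counterexample to the Cuttler–Greene–Skandera conjecture:
`H₍₄₄₎ ≥ H₍₅₂₁₎` on the nonnegative orthant of `ℝ³`, even though the partitions
`(4,4)` and `(5,2,1)` are incomparable in dominance order. -/
theorem H44_ge_H521_on_nonneg_orthant (y₁ y₂ y₃ : ℝ)
    (h₁ : 0 ≤ y₁) (h₂ : 0 ≤ y₂) (h₃ : 0 ≤ y₃) :
    hcomplete 5 y₁ y₂ y₃ * hcomplete 2 y₁ y₂ y₃ * hcomplete 1 y₁ y₂ y₃ / 378 ≤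
      hcomplete 4 y₁ y₂ y₃ ^ 2 / 225 := by
  have hnn : (0:ℝ) ≤ 2088 * (y₂ ^ 2 * y₃ ^ 4 * (y₃ - y₂) ^ 2) + 7974 * (y₃ ^ 6 * (y₂ - y₁) ^ 2) + 648 * (y₁ * y₂ ^ 5 * (y₃ - y₁) ^ 2) + 6372 * (y₁ * y₂ * y₃ ^ 4 * (y₃ - y₂) ^ 2) + 2340 * (y₁ ^ 4 * y₃ ^ 2 * (y₃ - y₁) ^ 2) + 1800 * (y₂ ^ 2 * y₃ ^ 4 * (y₂ - y₁) ^ 2) + 7218 * (y₂ ^ 6 * (y₃ - y₁) ^ 2) + 6372 * (y₁ * y₂ ^ 4 * y₃ * (y₃ - y₂) ^ 2) + 810 * (y₁ ^ 6 * (y₂ - y₁) ^ 2) + 3222 * (y₃ ^ 6 * (y₃ - y₂) ^ 2) + 1062 * (y₃ ^ 6 * (y₃ - y₁) ^ 2) + 3735 * (y₃ ^ 4 * (y₂ ^ 2 - y₁ ^ 2) ^ 2) + 1512 * (y₁ * y₂ * y₃ ^ 4 * (y₃ - y₁) ^ 2) + 810 * (y₂ ^ 6 * (y₂ - y₁) ^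 2) + 2052 * (y₂ ^ 4 * y₃ ^ 2 * (y₃ - y₁) ^ 2) + 3888 * (y₁ * y₂ ^ 5 * (y₂ - y₁) ^ 2) + 3348 * (y₂ ^ 6 * (y₃ - y₂) ^ 2) + 6372 * (y₁ ^ 4 * y₂ * y₃ * (y₃ - y₁) ^ 2) + 126 * (y₁ ^ 2 * y₂ ^ 2 * y₃ ^ 2 * (y₃ - y₂) ^ 2) + 5400 * (y₂ ^ 4 * (y₂ * y₃ - y₁ ^ 2) ^ 2) + 4392 * (y₃ ^ 4 * (y₂ * y₃ - y₁ ^ 2) ^ 2) + 1260 * (y₁ ^ 3 * y₂ ^ 2 * y₃ * (y₃ - y₂) ^ 2) + 8964 * (y₂ ^ 5 * y₃ * (y₃ - y₂) ^ 2) + 504 * (y₁ * y₂ ^ 2 * y₃ * (y₃ ^ 2 - y₁ * y₂) ^ 2) + 2214 * (y₂ ^ 4 * y₃ ^ 2 * (y₃ - y₂) ^ 2) + 837 * (y₁ ^ 4 * y₂ ^ 2 * (y₃ - y₂) ^ 2) + 504 * (y₁ ^ 3 * y₂ ^ 2 * y₃ * (y₂ - y₁) ^ 2) + 8712 * (y₂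 * y₃ ^ 5 * (y₃ - y₂) ^ 2) + 504 * (y₁ * y₂ ^ 4 * y₃ * (y₃ - y₁) ^ 2) + 5454 * (y₁ ^ 4 * y₂ * y₃ * (y₃ - y₂) ^ 2) + 3231 * (y₂ ^ 4 * (y₃ ^ 2 - y₁ ^ 2) ^ 2) + 4527 * (y₁ ^ 4 * y₃ ^ 2 * (y₃ - y₂) ^ 2) + 1260 * (y₁ ^ 3 * y₂ * y₃ ^ 2 * (y₃ - y₂) ^ 2) + 5652 * (y₁ ^ 4 * (y₂ ^ 2 - y₁ * y₃) ^ 2) + 144 * (y₁ * y₃ ^ 5 * (y₂ - y₁) ^ 2) + 3474 * (y₁ ^ 6 * (y₃ - y₁) ^ 2) + 7218 * (y₁ ^ 6 * (y₃ - y₂) ^ 2) + 3888 * (y₁ ^ 5 * y₂ * (y₂ - y₁) ^ 2) + 9216 * (y₁ ^ 5 * y₃ * (y₃ - y₁) ^ 2) + 4392 * (y₁ * y₃ ^ 5 * (y₃ - y₁) ^ 2) + 648 * (y₁ ^ 5 * y₂ * (y₃ - y₂) ^ 2) + 126 * (1 * (y₂ ^ 4 - y₁ ^ 2 * y₃ ^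 2) ^ 2) := by positivity
  have hex : 28 * (378 * hcomplete 4 y₁ y₂ y₃ ^ 2
      - 225 * (hcomplete 5 y₁ y₂ y₃ * hcomplete 2 y₁ y₂ y₃ * hcomplete 1 y₁ y₂ y₃)) =
      2088 * (y₂ ^ 2 * y₃ ^ 4 * (y₃ - y₂) ^ 2) + 7974 * (y₃ ^ 6 * (y₂ - y₁) ^ 2) + 648 * (y₁ * y₂ ^ 5 * (y₃ - y₁) ^ 2) + 6372 * (y₁ * y₂ * y₃ ^ 4 * (y₃ - y₂) ^ 2) + 2340 * (y₁ ^ 4 * y₃ ^ 2 * (y₃ - y₁) ^ 2) + 1800 * (y₂ ^ 2 * y₃ ^ 4 * (y₂ - y₁) ^ 2) + 7218 * (y₂ ^ 6 * (y₃ - y₁) ^ 2) + 6372 * (y₁ * y₂ ^ 4 * y₃ * (y₃ - y₂) ^ 2) + 810 * (y₁ ^ 6 * (y₂ - y₁) ^ 2) + 3222 * (y₃ ^ 6 * (y₃ - y₂) ^ 2) + 1062 * (y₃ ^ 6 * (y₃ - y₁) ^ 2) + 3735 * (y₃ ^ 4 * (y₂ ^ 2 - y₁ ^ 2) ^ 2)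 + 1512 * (y₁ * y₂ * y₃ ^ 4 * (y₃ - y₁) ^ 2) + 810 * (y₂ ^ 6 * (y₂ - y₁) ^ 2) + 2052 * (y₂ ^ 4 * y₃ ^ 2 * (y₃ - y₁) ^ 2) + 3888 * (y₁ * y₂ ^ 5 * (y₂ - y₁) ^ 2) + 3348 * (y₂ ^ 6 * (y₃ - y₂) ^ 2) + 6372 * (y₁ ^ 4 * y₂ * y₃ * (y₃ - y₁) ^ 2) + 126 * (y₁ ^ 2 * y₂ ^ 2 * y₃ ^ 2 * (y₃ - y₂) ^ 2) + 5400 * (y₂ ^ 4 * (y₂ * y₃ - y₁ ^ 2) ^ 2) + 4392 * (y₃ ^ 4 * (y₂ * y₃ - y₁ ^ 2) ^ 2) + 1260 * (y₁ ^ 3 * y₂ ^ 2 * y₃ * (y₃ - y₂) ^ 2) + 8964 * (y₂ ^ 5 * y₃ * (y₃ - y₂) ^ 2) + 504 * (y₁ * y₂ ^ 2 * y₃ * (y₃ ^ 2 - y₁ * y₂) ^ 2) + 2214 * (y₂ ^ 4 * y₃ ^ 2 * (y₃ - y₂) ^ 2) + 837 * (y₁ ^ 4 * y₂ ^ 2 *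 (y₃ - y₂) ^ 2) + 504 * (y₁ ^ 3 * y₂ ^ 2 * y₃ * (y₂ - y₁) ^ 2) + 8712 * (y₂ * y₃ ^ 5 * (y₃ - y₂) ^ 2) + 504 * (y₁ * y₂ ^ 4 * y₃ * (y₃ - y₁) ^ 2) + 5454 * (y₁ ^ 4 * y₂ * y₃ * (y₃ - y₂) ^ 2) + 3231 * (y₂ ^ 4 * (y₃ ^ 2 - y₁ ^ 2) ^ 2) + 4527 * (y₁ ^ 4 * y₃ ^ 2 * (y₃ - y₂) ^ 2) + 1260 * (y₁ ^ 3 * y₂ * y₃ ^ 2 * (y₃ - y₂) ^ 2) + 5652 * (y₁ ^ 4 * (y₂ ^ 2 - y₁ * y₃) ^ 2) + 144 * (y₁ * y₃ ^ 5 * (y₂ - y₁) ^ 2) + 3474 * (y₁ ^ 6 * (y₃ - y₁) ^ 2) + 7218 * (y₁ ^ 6 * (y₃ - y₂) ^ 2) + 3888 * (y₁ ^ 5 * y₂ * (y₂ - y₁) ^ 2) + 9216 * (y₁ ^ 5 * y₃ * (y₃ - y₁) ^ 2) + 4392 * (y₁ * y₃ ^ 5 * (y₃ - y₁) ^ 2)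 + 648 * (y₁ ^ 5 * y₂ * (y₃ - y₂) ^ 2) + 126 * (1 * (y₂ ^ 4 - y₁ ^ 2 * y₃ ^ 2) ^ 2) := by
    simp only [hcomplete]
    norm_num [Finset.sum_range_succ]
    ring
  rw [div_le_div_iff₀ (by norm_num) (by norm_num)]
  linarith [hnn, hex]
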